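/- arXiv:2405.14429 — 4 statements merged into one kernel-verified Lean document; each statement's English description precedes it below -/
import Mathlib

section
/- Let A ∈ ℝ^{d×d} be Hurwitz and B ∈ ℝ^{d×m}. Then the integral Σ = ∫₀^∞ exp(As)·B·Bᵀ·exp(Aᵀs) ds converges, and Σ satisfies the Lyapunov equation AΣ + ΣAᵀ = −BBᵀ. -/
open Matrix MeasureTheory

attribute [local instance] Matrix.linftyOpNormedAddCommGroup Matrix.linftyOpNormedRing
  Matrix.linftyOpNormedAlgebra

/-- A real square matrix is Hurwitz if all of its complex eigenvalues have
negative real part. -/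
def IsHurwitz {d : ℕ} (A : Matrix (Fin d) (Fin d) ℝ) : Prop :=
  ∀ μ ∈ spectrum ℂ (A.map (algebraMap ℝ ℂ)), μ.re < 0

/-!
For `g s = exp (s A) Q exp (s Aᵀ)` with `Q = B Bᵀ` one has `g' = A g + g Aᵀ`, so once `g`
decays exponentially, integrating `g'` over `(0, ∞)` gives `A Σ + Σ Aᵀ = 0 - g 0 = -Q`.
The decay of `exp (t A)` for a Hurwitz matrix is checked on each generalized eigenspace of its
complexification, which together span `ℂⁿ`: on the one for `μ`,
`exp (t A) v = e^{t μ} ∑_{i<k} tⁱ/i! (A - μ)ⁱ v` is a polynomial times `e^{t Re μ}`.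
-/

open Asymptotics Filter NormedSpace Set Topology

def DecaysExponentially {E : Type*} [Norm E] (f : ℝ → E) : Prop :=
  ∃ b > 0, f =O[atTop] fun t => Real.exp (-b * t)

lemma isBigO_exp_neg_mul_of_le {b c : ℝ} (h : b ≤ c) :
    (fun t => Real.exp (-c * t)) =O[atTop] fun t => Real.exp (-b * t) :=
  IsBigO.of_bound 1 <| by
    filter_upwards [eventually_ge_atTop 0] with t ht
    simp only [Real.norm_eq_abs, Real.abs_exp, one_mul]
    exact Real.exp_le_exp.2 (by nlinarith)

namespace DecaysExponentially

variable {E F : Type*} [NormedAddCommGroup E] [NormedAddCommGroup F] {f g : ℝ → E}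

lemma zero : DecaysExponentially fun _ => (0 : E) :=
  ⟨1, one_pos, isBigO_zero _ _⟩

lemma of_isBigO {g : ℝ → F} (hg : DecaysExponentially g) (hfg : f =O[atTop] g) :
    DecaysExponentially f :=
  let ⟨b, hb, h⟩ := hg
  ⟨b, hb, hfg.trans h⟩

lemma add (hf : DecaysExponentially f) (hg : DecaysExponentially g) :
    DecaysExponentially fun t => f t + g t := by
  obtain ⟨b, hb, hfb⟩ := hf
  obtain ⟨c, hc, hgc⟩ := hg
  exact ⟨min b c, lt_min hb hc, (hfb.trans (isBigO_exp_neg_mul_of_le (min_le_left b c))).add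
    (hgc.trans (isBigO_exp_neg_mul_of_le (min_le_right b c)))⟩

lemma sum {ι : Type*} (s : Finset ι) {f : ι → ℝ → E} (h : ∀ i ∈ s, DecaysExponentially (f i)) :
    DecaysExponentially fun t => ∑ i ∈ s, f i t := by
  classical
  induction s using Finset.induction_on with
  | empty => simpa using zero
  | insert i s hi ih =>
    simp_rw [Finset.sum_insert hi]
    exact (h i (Finset.mem_insert_self i s)).add
      (ih fun j hj => h j (Finset.mem_insert_of_mem hj))

lemma map {𝕜 : Type*} [NontriviallyNormedField 𝕜] [NormedSpace 𝕜 E] [NormedSpace 𝕜 F]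
    (L : E →L[𝕜] F) (hf : DecaysExponentially f) : DecaysExponentially fun t => L (f t) :=
  hf.of_isBigO (L.isBigO_comp f atTop)

lemma mul {R : Type*} [NormedRing R] {f g : ℝ → R} (hf : DecaysExponentially f)
    (hg : DecaysExponentially g) : DecaysExponentially fun t => f t * g t := by
  obtain ⟨b, hb, hfb⟩ := hf
  obtain ⟨c, hc, hgc⟩ := hg
  refine ⟨b + c, add_pos hb hc, (hfb.mul hgc).congr_right fun t => ?_⟩
  rw [← Real.exp_add]
  ring_nf

lemma mul_const {R : Type*} [NormedRing R] {f : ℝ → R} (hf : DecaysExponentially f) (a : R) :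
    DecaysExponentially fun t => f t * a :=
  hf.of_isBigO (isBigO_of_le' (c := ‖a‖) atTop fun _ => (norm_mul_le _ _).trans_eq (mul_comm _ _))

lemma tendsto_zero (hf : DecaysExponentially f) : Tendsto f atTop (𝓝 0) := by
  obtain ⟨b, hb, hfb⟩ := hf
  refine hfb.trans_tendsto (Real.tendsto_exp_atBot.comp ?_)
  exact tendsto_id.const_mul_atTop_of_neg (neg_neg_iff_pos.2 hb)

lemma integrableOn_Ioi (hf : DecaysExponentially f) (hcont : Continuous f) (a : ℝ) :
    IntegrableOn f (Ioi a) := by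
  obtain ⟨b, hb, hfb⟩ := hf
  refine (integrableOn_Ici_iff_integrableOn_Ioi (by finiteness)).mp <|
    (hcont.continuousOn.locallyIntegrableOn measurableSet_Ici).integrableOn_of_isBigO_atTop hfb
      ⟨Ioi b, Ioi_mem_atTop b, exp_neg_integrableOn_Ioi b hb⟩

end DecaysExponentially

section Lyapunov

variable {𝔸 : Type*} [NormedRing 𝔸] [NormedAlgebra ℝ 𝔸] [CompleteSpace 𝔸]

lemma hasDerivAt_exp_smul_mul_mul_exp_smul (X Q Y : 𝔸) (s : ℝ) :
    HasDerivAt (fun t : ℝ => exp (t • X) * Q * exp (t • Y))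
      (X * (exp (s • X) * Q * exp (s • Y)) + exp (s • X) * Q * exp (s • Y) * Y) s := by
  refine (((hasDerivAt_exp_smul_const' X s).mul_const Q).mul
    (hasDerivAt_exp_smul_const Y s)).congr_deriv ?_
  simp only [mul_assoc]

theorem lyapunov_integral_exp_smul_mul_mul_exp_smul {X Q Y : 𝔸}
    (hX : DecaysExponentially fun t : ℝ => exp (t • X))
    (hY : DecaysExponentially fun t : ℝ => exp (t • Y)) :
    IntegrableOn (fun s : ℝ => exp (s • X) * Q * exp (s • Y)) (Ioi 0) ∧
      X * (∫ s in Ioi (0 : ℝ), exp (s • X) * Q * exp (s • Y)) +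
        (∫ s in Ioi (0 : ℝ), exp (s • X) * Q * exp (s • Y)) * Y = -Q := by
  set g := fun s : ℝ => exp (s • X) * Q * exp (s • Y)
  have hderiv := hasDerivAt_exp_smul_mul_mul_exp_smul X Q Y
  have hdecay : DecaysExponentially g := (hX.mul_const Q).mul hY
  have hint : IntegrableOn g (Ioi 0) :=
    hdecay.integrableOn_Ioi (continuous_iff_continuousAt.2 fun s => (hderiv s).continuousAt) 0
  have hintX : IntegrableOn (fun s => X * g s) (Ioi 0) :=
    ((ContinuousLinearMap.mul ℝ 𝔸) X).integrable_comp hint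
  have hintY : IntegrableOn (fun s => g s * Y) (Ioi 0) :=
    ((ContinuousLinearMap.mul ℝ 𝔸).flip Y).integrable_comp hint
  refine ⟨hint, ?_⟩
  calc X * (∫ s in Ioi 0, g s) + (∫ s in Ioi 0, g s) * Y
      = ∫ s in Ioi 0, (X * g s + g s * Y) := by
        rw [integral_add hintX hintY]
        exact congr_arg₂ _ (((ContinuousLinearMap.mul ℝ 𝔸) X).integral_comp_comm hint).symm
          (((ContinuousLinearMap.mul ℝ 𝔸).flip Y).integral_comp_comm hint).symm
    _ = 0 - g 0 :=
        integral_Ioi_of_hasDerivAt_of_tendsto' (fun s _ => hderiv s) (hintX.add hintY)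
          hdecay.tendsto_zero
    _ = -Q := by simp [g]

end Lyapunov

lemma exp_eq_exp_smul_exp_sub_algebraMap {𝕂 𝔸 : Type*} [RCLike 𝕂] [NormedRing 𝔸]
    [NormedAlgebra 𝕂 𝔸] [CompleteSpace 𝔸] (x : 𝔸) (c : 𝕂) :
    exp x = exp c • exp (x - algebraMap 𝕂 𝔸 c) := by
  -- `exp_add_of_commute` is stated for `ℚ`-algebras
  let +nondep : NormedAlgebra ℚ 𝔸 := .restrictScalars ℚ 𝕂 𝔸
  calc exp x = exp (algebraMap 𝕂 𝔸 c + (x - algebraMap 𝕂 𝔸 c)) := by rw [add_sub_cancel]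
    _ = exp (algebraMap 𝕂 𝔸 c) * exp (x - algebraMap 𝕂 𝔸 c) :=
        exp_add_of_commute (Algebra.commutes c _)
    _ = exp c • exp (x - algebraMap 𝕂 𝔸 c) := by rw [← algebraMap_exp_comm, Algebra.smul_def]

lemma Module.End.mem_spectrum_of_mem_maxGenEigenspace {K V : Type*} [Field K] [AddCommGroup V]
    [Module K V] {f : Module.End K V} {μ : K} {x : V} (hx : x ∈ f.maxGenEigenspace μ)
    (hx0 : x ≠ 0) : μ ∈ spectrum K f :=
  (Module.End.HasUnifEigenvalue.lt (m := 1) (by simp)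
    fun h => hx0 ((Submodule.mem_bot K).1 (h ▸ hx))).mem_spectrum

lemma decaysExponentially_pow_mul_cexp (k : ℕ) {μ : ℂ} (hμ : μ.re < 0) :
    DecaysExponentially fun t : ℝ => (t : ℂ) ^ k * Complex.exp (t * μ) := by
  refine ⟨-μ.re / 2, by linarith, ?_⟩
  have hnorm : (fun t : ℝ => (t : ℂ) ^ k * Complex.exp (t * μ)) =O[atTop]
      fun t => t ^ k * Real.exp (μ.re * t) :=
    isBigO_of_le _ fun t => by simp [Complex.norm_exp, mul_comm]
  refine hnorm.trans (((isLittleO_pow_exp_pos_mul_atTop k (by linarith : 0 < -μ.re / 2)).isBigO.mul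
    (isBigO_refl _ _)).congr_right fun t => ?_)
  rw [← Real.exp_add]
  ring_nf

namespace Matrix

variable {n : Type*} [Fintype n] [DecidableEq n]

lemma exp_smul_mulVec_eq_sum_of_pow_mulVec_eq_zero {𝕂 : Type*} [RCLike 𝕂]
    {N : Matrix n n 𝕂} {x : n → 𝕂} {k : ℕ} (hk : N ^ k *ᵥ x = 0) (t : 𝕂) :
    exp (t • N) *ᵥ x = ∑ i ∈ Finset.range k, (t ^ i / i.factorial) • (N ^ i *ᵥ x) := by
  have hs := (exp_series_hasSum_exp' (𝕂 := 𝕂) (t • N)).map (mulVec.addMonoidHomLeft x)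
    (continuous_id.matrix_mulVec continuous_const)
  have hterm : ∀ i : ℕ, mulVec.addMonoidHomLeft x ((i.factorial⁻¹ : 𝕂) • (t • N) ^ i)
      = (t ^ i / i.factorial) • (N ^ i *ᵥ x) := fun i => by
    simp [mulVec.addMonoidHomLeft, smul_pow, smul_mulVec, smul_smul, div_eq_inv_mul]
  have hvanish : ∀ i ∉ Finset.range k, (t ^ i / i.factorial) • (N ^ i *ᵥ x) = 0 := fun i hi => by
    have hNi : N ^ i *ᵥ x = 0 := by
      rw [← Nat.sub_add_cancel (not_lt.1 (Finset.mem_range.not.1 hi)), pow_add, ← mulVec_mulVec,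
        hk, mulVec_zero]
    rw [hNi, smul_zero]
  simp only [Function.comp_def, hterm] at hs
  exact hs.unique (hasSum_sum_of_ne_finset_zero hvanish)

lemma decaysExponentially_exp_smul_mulVec_of_mem_maxGenEigenspace {M : Matrix n n ℂ} {μ : ℂ}
    (hμ : μ.re < 0) {x : n → ℂ} (hx : x ∈ Module.End.maxGenEigenspace (toLin' M) μ) :
    DecaysExponentially fun t : ℝ => exp ((t : ℂ) • M) *ᵥ x := by
  obtain ⟨k, hk⟩ := (Module.End.mem_maxGenEigenspace _ _ _).1 hx
  have hk' : (M - μ • 1) ^ k *ᵥ x = 0 := by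
    have hpow : (toLin' M - μ • 1) ^ k = toLin' ((M - μ • 1) ^ k) := by
      simp [Module.End.one_eq_id]
    rwa [hpow, toLin'_apply] at hk
  have hexpand : ∀ t : ℝ, exp ((t : ℂ) • M) *ᵥ x = ∑ i ∈ Finset.range k,
      ((t : ℂ) ^ i * Complex.exp (t * μ)) • ((i.factorial : ℂ)⁻¹ • ((M - μ • 1) ^ i *ᵥ x)) := by
    intro t
    have hsub : (t : ℂ) • M - algebraMap ℂ _ (t * μ) = (t : ℂ) • (M - μ • 1) := by
      rw [smul_sub, smul_smul, Algebra.algebraMap_eq_smul_one]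
    have hsplit : exp ((t : ℂ) • M) = Complex.exp (t * μ) • exp ((t : ℂ) • (M - μ • 1)) := by
      rw [Complex.exp_eq_exp_ℂ, ← hsub]
      exact exp_eq_exp_smul_exp_sub_algebraMap _ _
    rw [hsplit, smul_mulVec, exp_smul_mulVec_eq_sum_of_pow_mulVec_eq_zero hk', Finset.smul_sum]
    refine Finset.sum_congr rfl fun i _ => ?_
    rw [smul_smul, smul_smul]
    ring_nf
  simp_rw [hexpand]
  exact DecaysExponentially.sum _ fun i _ =>
    (decaysExponentially_pow_mul_cexp i hμ).map (ContinuousLinearMap.toSpanSingleton ℂ _)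

def expDecaySubmodule (M : Matrix n n ℂ) : Submodule ℂ (n → ℂ) where
  carrier := {x | DecaysExponentially fun t : ℝ => exp ((t : ℂ) • M) *ᵥ x}
  add_mem' hx hy := by simpa only [Set.mem_ofPred_eq, mulVec_add] using hx.add hy
  zero_mem' := by simpa only [Set.mem_ofPred_eq, mulVec_zero] using DecaysExponentially.zero
  smul_mem' c x hx := by
    have hcx := hx.map (c • ContinuousLinearMap.id ℂ _)
    simp only [_root_.smul_apply, ContinuousLinearMap.id_apply] at hcx
    simpa only [Set.mem_ofPred_eq, mulVec_smul] using hcx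

lemma expDecaySubmodule_eq_top {M : Matrix n n ℂ} (hM : ∀ μ ∈ spectrum ℂ M, μ.re < 0) :
    M.expDecaySubmodule = ⊤ := by
  rw [eq_top_iff, ← Module.End.iSup_maxGenEigenspace_eq_top (toLin' M)]
  refine iSup_le fun μ x hx => ?_
  by_cases hx0 : x = 0
  · exact hx0 ▸ zero_mem _
  · exact decaysExponentially_exp_smul_mulVec_of_mem_maxGenEigenspace
      (hM μ (spectrum_toLin' M ▸ Module.End.mem_spectrum_of_mem_maxGenEigenspace hx hx0)) hx

lemma decaysExponentially_exp_smul {M : Matrix n n ℂ} (hM : ∀ μ ∈ spectrum ℂ M, μ.re < 0) :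
    DecaysExponentially fun t : ℝ => exp ((t : ℂ) • M) := by
  have hcol (j : n) : DecaysExponentially fun t : ℝ => exp ((t : ℂ) • M) *ᵥ Pi.single j 1 := by
    change Pi.single j 1 ∈ M.expDecaySubmodule
    simp [expDecaySubmodule_eq_top hM]
  let place (i j : n) : (n → ℂ) →L[ℂ] Matrix n n ℂ :=
    (ContinuousLinearMap.proj i).smulRight (single i j 1)
  have hentries (P : Matrix n n ℂ) : P = ∑ i, ∑ j, place i j (P *ᵥ Pi.single j 1) := by
    conv_lhs => rw [matrix_eq_sum_single P]
    simp [place, smul_single]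
  rw [funext fun t : ℝ => hentries (exp ((t : ℂ) • M))]
  exact DecaysExponentially.sum Finset.univ fun i _ =>
    DecaysExponentially.sum Finset.univ fun j _ => (hcol j).map (place i j)

end Matrix

lemma DecaysExponentially.exp_smul_transpose {n : Type*} [Fintype n] [DecidableEq n]
    {X : Matrix n n ℝ} (hX : DecaysExponentially fun t : ℝ => exp (t • X)) :
    DecaysExponentially fun t : ℝ => exp (t • Xᵀ) := by
  let transposeCLM : Matrix n n ℝ →L[ℝ] Matrix n n ℝ :=
    LinearMap.toContinuousLinearMap (transposeLinearEquiv n n ℝ ℝ).toLinearMap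
  have htranspose (t : ℝ) : exp (t • Xᵀ) = transposeCLM (exp (t • X)) := by
    rw [← transpose_smul, exp_transpose]
    rfl
  rw [funext htranspose]
  exact hX.map transposeCLM

lemma IsHurwitz.decaysExponentially_exp_smul {d : ℕ} {A : Matrix (Fin d) (Fin d) ℝ}
    (hA : IsHurwitz A) : DecaysExponentially fun t : ℝ => exp (t • A) := by
  have hcomplexify (t : ℝ) :
      (exp (t • A)).map (algebraMap ℝ ℂ) = exp ((t : ℂ) • A.map (algebraMap ℝ ℂ)) := by
    have hcont : Continuous ((algebraMap ℝ ℂ).mapMatrix : Matrix (Fin d) (Fin d) ℝ →+* _) :=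
      continuous_id.matrix_map (continuous_algebraMap ℝ ℂ)
    refine (map_exp _ hcont (t • A)).trans (congr_arg exp ?_)
    ext i j
    simp
  let reCLM : Matrix (Fin d) (Fin d) ℂ →L[ℝ] Matrix (Fin d) (Fin d) ℝ :=
    LinearMap.toContinuousLinearMap (Complex.reLm.mapMatrix)
  have hre (t : ℝ) : exp (t • A) = reCLM (exp ((t : ℂ) • A.map (algebraMap ℝ ℂ))) := by
    rw [← hcomplexify]
    ext i j
    simp [reCLM]
  rw [funext hre]
  exact (Matrix.decaysExponentially_exp_smul hA).map reCLM

theorem lyapunov_gramian {d m : ℕ} (A : Matrix (Fin d) (Fin d) ℝ)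
    (B : Matrix (Fin d) (Fin m) ℝ) (hA : IsHurwitz A) :
    @IntegrableOn _ _ _ UniformSpace.toTopologicalSpace SeminormedAddGroup.toContinuousENorm
      (fun s : ℝ => NormedSpace.exp (s • A) * B * Bᵀ * NormedSpace.exp (s • Aᵀ))
      (Set.Ioi 0) volume ∧
    A * (∫ s in Set.Ioi (0:ℝ),
          NormedSpace.exp (s • A) * B * Bᵀ * NormedSpace.exp (s • Aᵀ)) +
      (∫ s in Set.Ioi (0:ℝ),
          NormedSpace.exp (s • A) * B * Bᵀ * NormedSpace.exp (s • Aᵀ)) * Aᵀ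
      = -(B * Bᵀ) := by
  have hdecay := hA.decaysExponentially_exp_smul
  have hassoc : (fun s : ℝ => exp (s • A) * B * Bᵀ * exp (s • Aᵀ)) =
      fun s => exp (s • A) * (B * Bᵀ) * exp (s • Aᵀ) := by
    simp only [Matrix.mul_assoc]
  rw [hassoc]
  exact lyapunov_integral_exp_smul_mul_mul_exp_smul hdecay hdecay.exp_smul_transpose
end

section
/- For symmetric positive definite C₁, C₂ ∈ ℝ^{d×d}, the matrix identity ‖M⁻¹(C₁⁻²z + C₂⁻²w)‖² − ‖C₁⁻¹z‖² − ‖C₂⁻¹w‖² = −(z−w)ᵀ(C₁² + C₂²)⁻¹(z−w) holds for all z, w ∈ ℝ^d, where M = (C₁⁻² + C₂⁻²)^{1/2}. -/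
/-!
Write `A = C₁⁻²`, `B = C₂⁻²` and `S = (A + B)⁻¹ = M⁻²`, so that the left side is
`(Az + Bw)ᵀ S (Az + Bw) - zᵀAz - wᵀBw`. From `A S (A + B) = A = (A + B) S A` one gets
`A S A = A - K` and `B S B = B - K` with `K = A S B = B S A`, after which everything cancels except
`-(z - w)ᵀ K (z - w)`. Finally `K = (A⁻¹ + B⁻¹)⁻¹ = (C₁² + C₂²)⁻¹`.
-/

open Matrix

namespace Matrix

variable {n R : Type*} [Fintype n] [CommRing R]

lemma IsSymm.mulVec_dotProduct {P : Matrix n n R} (hP : P.IsSymm) (x y : n → R) :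
    (P *ᵥ x) ⬝ᵥ y = x ⬝ᵥ (P *ᵥ y) := by
  rw [dotProduct_comm, ← dotProduct_transpose_mulVec, hP.eq]

lemma IsSymm.mulVec_dotProduct_mulVec_self [DecidableEq n] {P : Matrix n n R} (hP : P.IsSymm)
    (v : n → R) : (P *ᵥ v) ⬝ᵥ (P *ᵥ v) = v ⬝ᵥ (P ^ 2 *ᵥ v) := by
  rw [hP.mulVec_dotProduct, mulVec_mulVec, sq]

variable [DecidableEq n]

lemma mul_inv_add_mul_comm {A B : Matrix n n R} (h : IsUnit (A + B).det) :
    A * (A + B)⁻¹ * B = B * (A + B)⁻¹ * A := by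
  have hright : A * (A + B)⁻¹ * A + A * (A + B)⁻¹ * B = A := by
    rw [← mul_add, mul_assoc, nonsing_inv_mul _ h, mul_one]
  have hleft : A * (A + B)⁻¹ * A + B * (A + B)⁻¹ * A = A := by
    rw [← add_mul, ← add_mul, mul_nonsing_inv _ h, one_mul]
  exact add_left_cancel (hright.trans hleft.symm)

lemma inv_inv_add_inv {A B : Matrix n n R} (hA : IsUnit A.det) (hB : IsUnit B.det) :
    (A⁻¹ + B⁻¹)⁻¹ = A * (A + B)⁻¹ * B := by
  rw [add_comm, inv_add_inv (iff_of_true ((isUnit_iff_isUnit_det B).mpr hB)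
      ((isUnit_iff_isUnit_det A).mpr hA)), mul_inv_rev, mul_inv_rev,
    nonsing_inv_nonsing_inv _ hA, nonsing_inv_nonsing_inv _ hB, add_comm, mul_assoc]

lemma IsSymm.dotProduct_inv_add_mulVec_self_sub {A B : Matrix n n R} (hA : A.IsSymm)
    (hB : B.IsSymm) (h : IsUnit (A + B).det) (z w : n → R) :
    (A *ᵥ z + B *ᵥ w) ⬝ᵥ ((A + B)⁻¹ *ᵥ (A *ᵥ z + B *ᵥ w)) - z ⬝ᵥ (A *ᵥ z) - w ⬝ᵥ (B *ᵥ w) =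
      -((z - w) ⬝ᵥ ((A * (A + B)⁻¹ * B) *ᵥ (z - w))) := by
  set S := (A + B)⁻¹
  set K := A * S * B
  have hASA : A * S * A = A - K := by
    rw [eq_sub_iff_add_eq, ← mul_add, mul_assoc, nonsing_inv_mul _ h, mul_one]
  have hBSA : B * S * A = K := (mul_inv_add_mul_comm h).symm
  have hBSB : B * S * B = B - K := by
    rw [eq_sub_iff_add_eq, ← hBSA, add_comm, ← mul_add, mul_assoc, nonsing_inv_mul _ h, mul_one]
  simp only [add_dotProduct, mulVec_add, dotProduct_add, hA.mulVec_dotProduct,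
    hB.mulVec_dotProduct, mulVec_mulVec, ← mul_assoc, hASA, hBSA, hBSB]
  simp only [sub_mulVec, mulVec_sub, dotProduct_sub, sub_dotProduct]
  ring

end Matrix

theorem gaussian_cross_term_identity {d : ℕ} (C₁ C₂ M : Matrix (Fin d) (Fin d) ℝ)
    (hC₁ : C₁.PosDef) (hC₂ : C₂.PosDef) (hM : M.PosDef)
    (hM2 : M ^ 2 = C₁⁻¹ ^ 2 + C₂⁻¹ ^ 2) (z w : Fin d → ℝ) :
    (M⁻¹.mulVec ((C₁⁻¹ ^ 2).mulVec z + (C₂⁻¹ ^ 2).mulVec w)) ⬝ᵥ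
        (M⁻¹.mulVec ((C₁⁻¹ ^ 2).mulVec z + (C₂⁻¹ ^ 2).mulVec w)) -
      (C₁⁻¹.mulVec z) ⬝ᵥ (C₁⁻¹.mulVec z) - (C₂⁻¹.mulVec w) ⬝ᵥ (C₂⁻¹.mulVec w)
      = -((z - w) ⬝ᵥ ((C₁ ^ 2 + C₂ ^ 2)⁻¹).mulVec (z - w)) := by
  have hsymm_inv {C : Matrix (Fin d) (Fin d) ℝ} (hC : C.PosDef) : C⁻¹.IsSymm :=
    (isHermitian_iff_isSymm.mp hC.isHermitian).inv
  have hunit_det {C : Matrix (Fin d) (Fin d) ℝ} (hC : C.PosDef) (k : ℕ) : IsUnit (C ^ k).det :=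
    (isUnit_iff_isUnit_det _).mp (hC.isUnit.pow k)
  have hsum_inv : (C₁ ^ 2 + C₂ ^ 2)⁻¹ = C₁⁻¹ ^ 2 * (C₁⁻¹ ^ 2 + C₂⁻¹ ^ 2)⁻¹ * C₂⁻¹ ^ 2 := by
    rw [← inv_inv_add_inv (hunit_det hC₁.inv 2) (hunit_det hC₂.inv 2), inv_pow', inv_pow',
      nonsing_inv_nonsing_inv _ (hunit_det hC₁ 2), nonsing_inv_nonsing_inv _ (hunit_det hC₂ 2)]
  rw [(hsymm_inv hM).mulVec_dotProduct_mulVec_self,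
    (hsymm_inv hC₁).mulVec_dotProduct_mulVec_self, (hsymm_inv hC₂).mulVec_dotProduct_mulVec_self,
    inv_pow' M, hM2, hsum_inv]
  exact ((hsymm_inv hC₁).pow 2).dotProduct_inv_add_mulVec_self_sub ((hsymm_inv hC₂).pow 2)
    (hM2 ▸ hunit_det hM 2) z w
end

section
/- For σ₁ ≥ σ₂ > 0, the one-dimensional Gaussian kernels k^σ(x,y) = exp(−(x−y)²/σ²) on ℝ satisfy k^{σ₁} ⪯ (σ₁/σ₂)·k^{σ₂}. -/
/-! Up to the factor `2√π/σ`, the Gaussian `k^σ` is the cosine transform of the weight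
`exp (-σ²ω²/4)`. The quadratic form of the cosine transform of a weight `w` is
`∫ w(ω) |∑ αᵢ e^{i xᵢ ω}|² dω`, hence monotone in `w`; as the weight decreases in `σ`,
`k^{σ₁}/σ₁ ⪯ k^{σ₂}/σ₂`. -/

/-- `KerLE k₁ k₂` means `k₁ ⪯ k₂`. -/
def KerLE {S : Type*} (k₁ k₂ : S → S → ℝ) : Prop :=
  ∀ (n : ℕ) (α : Fin n → ℝ) (x : Fin n → S),
    ∑ i, ∑ j, α i * α j * k₁ (x i) (x j) ≤ ∑ i, ∑ j, α i * α j * k₂ (x i) (x j)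

/-- One-dimensional Gaussian kernel with width `σ`. -/
noncomputable def gaussKer (σ : ℝ) : ℝ → ℝ → ℝ :=
  fun x y => Real.exp (-((x - y) ^ 2 / σ ^ 2))

open Real MeasureTheory

lemma integral_exp_neg_mul_sq_mul_cos {a : ℝ} (ha : 0 < a) (t : ℝ) :
    ∫ ω : ℝ, exp (-a * ω ^ 2) * cos (t * ω) = √(π / a) * exp (-(t ^ 2 / (4 * a))) := by
  have ha' : 0 < (a : ℂ).re := by simpa using ha
  have hint :
      Integrable fun ω : ℝ => Complex.exp (Complex.I * t * ω) * Complex.exp (-a * ω ^ 2) :=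
    (integrable_cexp_quadratic ha' (Complex.I * t) 0).congr <| .of_forall fun ω => by
      simp only [add_zero, ← Complex.exp_add]; ring_nf
  have hre : ∀ ω : ℝ, (Complex.exp (Complex.I * t * ω) * Complex.exp (-a * ω ^ 2)).re
      = exp (-a * ω ^ 2) * cos (t * ω) := fun ω => by
    simp [Complex.exp_re, Complex.exp_im, Complex.mul_re, ← Complex.ofReal_pow, mul_comm]
  have hsqrt : (π / a : ℂ) ^ (1 / 2 : ℂ) = (√(π / a) : ℝ) := by
    rw [sqrt_eq_rpow, Complex.ofReal_cpow (by positivity)]; norm_num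
  have h := congrArg Complex.re (fourierIntegral_gaussian ha' t)
  rw [← RCLike.re_to_complex, ← integral_re hint] at h
  simp only [RCLike.re_to_complex, hre, hsqrt] at h
  rw [h, neg_div]
  norm_cast

noncomputable def cosKernel (w : ℝ → ℝ) (x y : ℝ) : ℝ :=
  ∫ ω, w ω * cos ((x - y) * ω)

section

variable {ι : Type*} [Fintype ι] (α x : ι → ℝ)

lemma sum_sum_mul_cos_sub_mul_eq (ω : ℝ) :
    ∑ i, ∑ j, α i * α j * cos ((x i - x j) * ω)
      = (∑ i, α i * cos (x i * ω)) ^ 2 + (∑ i, α i * sin (x i * ω)) ^ 2 := by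
  simp only [sq, Finset.sum_mul_sum, ← Finset.sum_add_distrib, sub_mul, cos_sub]
  exact Finset.sum_congr rfl fun i _ => Finset.sum_congr rfl fun j _ => by ring

lemma sum_sum_mul_cos_sub_mul_nonneg (ω : ℝ) :
    0 ≤ ∑ i, ∑ j, α i * α j * cos ((x i - x j) * ω) := by
  rw [sum_sum_mul_cos_sub_mul_eq]; positivity

variable {w : ℝ → ℝ}

lemma MeasureTheory.Integrable.mul_cos_mul (hw : Integrable w) (t : ℝ) :
    Integrable fun ω => w ω * cos (t * ω) :=
  hw.mul_bdd (by fun_prop) (c := 1) (.of_forall fun ω => by simpa using abs_cos_le_one (t * ω))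

lemma MeasureTheory.Integrable.mul_sum_sum_cos (hw : Integrable w) :
    Integrable fun ω => w ω * ∑ i, ∑ j, α i * α j * cos ((x i - x j) * ω) := by
  simp only [Finset.mul_sum, mul_left_comm (w _)]
  exact integrable_finsetSum _ fun i _ => integrable_finsetSum _ fun j _ =>
    (hw.mul_cos_mul _).const_mul _

lemma sum_sum_mul_cosKernel (hw : Integrable w) :
    ∑ i, ∑ j, α i * α j * cosKernel w (x i) (x j)
      = ∫ ω, w ω * ∑ i, ∑ j, α i * α j * cos ((x i - x j) * ω) := by
  simp only [Finset.mul_sum, mul_left_comm (w _)]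
  rw [integral_finsetSum _ fun i _ => integrable_finsetSum _ fun j _ =>
    (hw.mul_cos_mul _).const_mul _]
  refine Finset.sum_congr rfl fun i _ => ?_
  rw [integral_finsetSum _ fun j _ => (hw.mul_cos_mul _).const_mul _]
  simp only [integral_const_mul, cosKernel]

end

lemma kerLE_cosKernel {w₁ w₂ : ℝ → ℝ} (hw₁ : Integrable w₁) (hw₂ : Integrable w₂)
    (h : w₁ ≤ w₂) : KerLE (cosKernel w₁) (cosKernel w₂) := fun _ α x => by
  rw [sum_sum_mul_cosKernel α x hw₁, sum_sum_mul_cosKernel α x hw₂]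
  exact integral_mono (hw₁.mul_sum_sum_cos α x) (hw₂.mul_sum_sum_cos α x) fun ω =>
    mul_le_mul_of_nonneg_right (h ω) (sum_sum_mul_cos_sub_mul_nonneg α x ω)

lemma KerLE.const_mul {S : Type*} {k₁ k₂ : S → S → ℝ} (h : KerLE k₁ k₂) {c : ℝ}
    (hc : 0 ≤ c) :
    KerLE (fun x y => c * k₁ x y) (fun x y => c * k₂ x y) := fun n α x => by
  have := mul_le_mul_of_nonneg_left (h n α x) hc
  simpa only [Finset.mul_sum, mul_left_comm c] using this

lemma cosKernel_exp_neg_mul_sq {σ : ℝ} (hσ : 0 < σ) :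
    cosKernel (fun ω => exp (-(σ ^ 2 / 4) * ω ^ 2)) =
      fun x y => 2 * √π / σ * gaussKer σ x y := by
  have hsqrt : √(π / (σ ^ 2 / 4)) = 2 * √π / σ := by
    rw [show π / (σ ^ 2 / 4) = (2 * √π / σ) ^ 2 by field_simp; rw [sq_sqrt pi_pos.le]; ring]
    exact sqrt_sq (by positivity)
  ext x y
  rw [cosKernel, integral_exp_neg_mul_sq_mul_cos (by positivity), hsqrt, gaussKer]
  congr 3
  field_simp

theorem gauss_kernel_scalar_mono (σ₁ σ₂ : ℝ) (h₂ : 0 < σ₂) (h₁₂ : σ₂ ≤ σ₁) :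
    KerLE (gaussKer σ₁) (fun x y => (σ₁ / σ₂) * gaussKer σ₂ x y) := by
  have h₁ : 0 < σ₁ := h₂.trans_le h₁₂
  have hweight :
      (fun ω => exp (-(σ₁ ^ 2 / 4) * ω ^ 2)) ≤ fun ω => exp (-(σ₂ ^ 2 / 4) * ω ^ 2) :=
    fun ω => exp_le_exp.2 <| by nlinarith [sq_nonneg ω, mul_le_mul h₁₂ h₁₂ h₂.le h₁.le]
  have h := (kerLE_cosKernel (integrable_exp_neg_mul_sq (by positivity))
    (integrable_exp_neg_mul_sq (by positivity)) hweight).const_mul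
    (c := σ₁ / (2 * √π)) (by positivity)
  rw [cosKernel_exp_neg_mul_sq h₁, cosKernel_exp_neg_mul_sq h₂] at h
  convert h using 3 <;> field_simp
end

section
/- Let A ∈ ℝ^{d×d}, B ∈ ℝ^{d×m}, and C ∈ ℝ^{d×d} symmetric positive definite. Define C_t² = e^{−At}(C² + 2Σ(t))e^{−Aᵀt} where Σ(t) = ∫₀ᵗ e^{As}BBᵀe^{Aᵀs}ds. Then C_t² ≥ C² (Loewner order) for all t ≥ 0 if and only if AC² + C²Aᵀ ≤ 2BBᵀ. -/
open Matrix MeasureTheory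

attribute [local instance] Matrix.linftyOpNormedAddCommGroup Matrix.linftyOpNormedRing
  Matrix.linftyOpNormedAlgebra

/-!
Substituting `s ↦ s - t` turns `C_t²` into `e^{-At} C² e^{-Aᵀt} + 2 ∫_{-t}^0 e^{As} BBᵀ e^{Aᵀs} ds`,
whose derivative is the congruence `e^{-At} L e^{-Aᵀt}` of `L = 2BBᵀ - (AC² + C²Aᵀ)`. If `L ≥ 0`,
every quadratic form `t ↦ xᵀ C_t² x` is nondecreasing, so `C_t² ≥ C_0² = C²` for `t ≥ 0`.
Conversely, if `C_t² ≥ C²` for `t ≥ 0`, each such form is minimal on `[0, ∞)` at `t = 0`, so its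
derivative `xᵀ L x` there is nonnegative.
-/

open NormedSpace

section BanachAlgebra

variable {𝔸 : Type*} [NormedRing 𝔸] [NormedAlgebra ℝ 𝔸] [CompleteSpace 𝔸]

theorem exp_smul_mul_exp_smul (a : 𝔸) (s t : ℝ) :
    exp (s • a) * exp (t • a) = exp ((s + t) • a) := by
  have hball : ∀ x : 𝔸, x ∈ Metric.eball (0 : 𝔸) (expSeries ℝ 𝔸).radius := fun x => by
    simp [expSeries_radius_eq_top]
  rw [add_smul, exp_add_of_commute_of_mem_ball (((Commute.refl a).smul_left s).smul_right t)
    (hball _) (hball _)]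

theorem continuous_exp_smul_mul_mul_exp_smul (a b n : 𝔸) :
    Continuous fun s : ℝ => exp (s • a) * n * exp (s • b) :=
  ((differentiable_exp_smul_const ℝ a).continuous.mul continuous_const).mul
    (differentiable_exp_smul_const ℝ b).continuous

theorem exp_neg_smul_mul_intervalIntegral_mul_exp_neg_smul (a b n : 𝔸) (t : ℝ) :
    exp ((-t) • a) * (∫ s in (0 : ℝ)..t, exp (s • a) * n * exp (s • b)) * exp ((-t) • b) =
      ∫ s in (-t)..0, exp (s • a) * n * exp (s • b) := by
  set f : ℝ → 𝔸 := fun s => exp (s • a) * n * exp (s • b)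
  calc exp ((-t) • a) * (∫ s in (0 : ℝ)..t, f s) * exp ((-t) • b)
      = ∫ s in (0 : ℝ)..t, exp ((-t) • a) * f s * exp ((-t) • b) :=
        ((ContinuousLinearMap.mulLeftRight ℝ 𝔸 _ _).intervalIntegral_comp_comm
          ((continuous_exp_smul_mul_mul_exp_smul a b n).intervalIntegrable 0 t)).symm
    _ = ∫ s in (0 : ℝ)..t, f (s - t) := by
        refine intervalIntegral.integral_congr fun s _ => ?_
        have ha : exp ((-t) • a) * exp (s • a) = exp ((s - t) • a) := by
          rw [exp_smul_mul_exp_smul, neg_add_eq_sub]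
        have hb : exp (s • b) * exp ((-t) • b) = exp ((s - t) • b) := by
          rw [exp_smul_mul_exp_smul, ← sub_eq_add_neg]
        simp only [f, ← ha, ← hb, mul_assoc]
    _ = ∫ s in (-t)..0, f s := by
        simp [intervalIntegral.integral_comp_sub_right]

theorem hasDerivAt_exp_neg_smul (a : 𝔸) (t : ℝ) :
    HasDerivAt (fun t : ℝ => exp ((-t) • a)) (-(exp ((-t) • a) * a)) t := by
  simpa [Function.comp_def] using (hasDerivAt_exp_smul_const a (-t)).scomp t (hasDerivAt_neg t)

theorem hasDerivAt_exp_neg_smul' (a : 𝔸) (t : ℝ) :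
    HasDerivAt (fun t : ℝ => exp ((-t) • a)) (-(a * exp ((-t) • a))) t := by
  simpa [Function.comp_def] using (hasDerivAt_exp_smul_const' a (-t)).scomp t (hasDerivAt_neg t)

theorem hasDerivAt_exp_neg_smul_mul_add_intervalIntegral_mul (a b m n : 𝔸) (t : ℝ) :
    HasDerivAt
      (fun t : ℝ => exp ((-t) • a) * (m + ∫ s in (0 : ℝ)..t, exp (s • a) * n * exp (s • b)) *
        exp ((-t) • b))
      (exp ((-t) • a) * (n - (a * m + m * b)) * exp ((-t) • b)) t := by
  set f : ℝ → 𝔸 := fun s => exp (s • a) * n * exp (s • b)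
  have hsplit : ∀ t : ℝ, exp ((-t) • a) * (m + ∫ s in (0 : ℝ)..t, f s) * exp ((-t) • b) =
      exp ((-t) • a) * m * exp ((-t) • b) + ∫ s in (0 : ℝ)..t, f (-s) := fun t => by
    rw [mul_add, add_mul, exp_neg_smul_mul_intervalIntegral_mul_exp_neg_smul,
      intervalIntegral.integral_comp_neg, neg_zero]
  rw [funext hsplit]
  have hconj := ((hasDerivAt_exp_neg_smul a t).mul_const m).mul (hasDerivAt_exp_neg_smul' b t)
  have hint := ((continuous_exp_smul_mul_mul_exp_smul a b n).comp continuous_neg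
    ).integral_hasStrictDerivAt 0 t
  refine (hconj.add hint.hasDerivAt).congr_deriv ?_
  simp only [Function.comp_apply]
  noncomm_ring

end BanachAlgebra

theorem HasDerivAt.linearMap_comp {E G : Type*} [NormedAddCommGroup E] [NormedSpace ℝ E]
    [FiniteDimensional ℝ E] [NormedAddCommGroup G] [NormedSpace ℝ G] (ℓ : E →ₗ[ℝ] G)
    {f : ℝ → E} {f' : E} {t : ℝ} (hf : HasDerivAt f f' t) :
    HasDerivAt (fun s => ℓ (f s)) (ℓ f') t :=
  (LinearMap.toContinuousLinearMap ℓ).hasFDerivAt.comp_hasDerivAt t hf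

theorem HasDerivAt.nonneg_of_isMinOn_Ici {g : ℝ → ℝ} {g' a : ℝ} (hg : HasDerivAt g g' a)
    (hmin : IsMinOn g (Set.Ici a) a) : 0 ≤ g' := by
  have h1 : (1 : ℝ) ∈ posTangentConeAt (Set.Ici a) a :=
    mem_posTangentConeAt_of_segment_subset (by simp [Set.Icc_subset_Ici_self])
  simpa using hmin.localize.hasFDerivWithinAt_nonneg hg.hasFDerivAt.hasFDerivWithinAt h1

section Matrix

variable {n : Type*} [Fintype n] [DecidableEq n] {F : ℝ → Matrix n n ℝ}

theorem HasDerivAt.matrix_transpose {F' : Matrix n n ℝ} {t : ℝ} (hF : HasDerivAt F F' t) :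
    HasDerivAt (fun s => (F s)ᵀ) F'ᵀ t := by
  exact HasDerivAt.linearMap_comp (transposeLinearEquiv n n ℝ ℝ).toLinearMap hF

theorem HasDerivAt.dotProduct_mulVec {F' : Matrix n n ℝ} {t : ℝ} (hF : HasDerivAt F F' t)
    (x y : n → ℝ) : HasDerivAt (fun s => x ⬝ᵥ F s *ᵥ y) (x ⬝ᵥ F' *ᵥ y) t := by
  simpa using HasDerivAt.linearMap_comp (dotProductBilin ℝ ℝ x ∘ₗ (mulVecBilin ℝ ℝ).flip y) hF

theorem isSymm_sub_of_hasDerivAt {F' : ℝ → Matrix n n ℝ} (hF : ∀ t, HasDerivAt F (F' t) t)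
    (hF' : ∀ t, (F' t).IsSymm) (t s : ℝ) : (F t - F s).IsSymm := by
  have hconst : ∀ u, HasDerivAt (fun u => F u - (F u)ᵀ) 0 u := fun u => by
    have h := (hF u).sub (hF u).matrix_transpose
    rwa [(hF' u).eq, sub_self] at h
  have heq := is_const_of_deriv_eq_zero (fun u => (hconst u).differentiableAt)
    (fun u => (hconst u).deriv) t s
  rw [IsSymm, transpose_sub]
  exact (sub_eq_sub_iff_sub_eq_sub.mp heq).symm

theorem posSemidef_sub_iff_of_hasDerivAt {P : ℝ → Matrix n n ℝ} {L : Matrix n n ℝ}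
    (hL : L.IsHermitian) (hP : P 0 = 1) (hF : ∀ t, HasDerivAt F (P t * L * (P t)ᵀ) t) :
    (∀ t, 0 ≤ t → (F t - F 0).PosSemidef) ↔ L.PosSemidef := by
  have hcongr : ∀ t, L.PosSemidef → (P t * L * (P t)ᵀ).PosSemidef := fun t hL' => by
    simpa [conjTranspose_eq_transpose_of_trivial] using hL'.mul_mul_conjTranspose_same (P t)
  have hquad : ∀ x t, x ⬝ᵥ (F t - F 0) *ᵥ x = x ⬝ᵥ F t *ᵥ x - x ⬝ᵥ F 0 *ᵥ x := by
    simp [sub_mulVec, dotProduct_sub]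
  constructor
  · intro hge
    refine posSemidef_iff_dotProduct_mulVec.mpr ⟨hL, fun x => ?_⟩
    have h0 := (hF 0).dotProduct_mulVec x x
    rw [hP, transpose_one, Matrix.one_mul, Matrix.mul_one] at h0
    refine h0.nonneg_of_isMinOn_Ici fun t (ht : 0 ≤ t) => ?_
    simpa [hquad] using (hge t ht).dotProduct_mulVec_nonneg x
  · intro hL' t ht
    refine posSemidef_iff_dotProduct_mulVec.mpr ⟨?_, fun x => ?_⟩
    · exact isHermitian_iff_isSymm.mpr (isSymm_sub_of_hasDerivAt hF
        (fun t => isHermitian_iff_isSymm.mp (hcongr t hL').isHermitian) t 0)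
    have hmono := monotone_of_hasDerivAt_nonneg (fun t => (hF t).dotProduct_mulVec x x)
      fun t => by simpa using (hcongr t hL').dotProduct_mulVec_nonneg x
    simpa [hquad] using hmono ht

end Matrix

theorem loewner_monotone_iff_lyapunov_general {d m : ℕ} (A : Matrix (Fin d) (Fin d) ℝ)
    (B : Matrix (Fin d) (Fin m) ℝ) (C : Matrix (Fin d) (Fin d) ℝ)
    (hCsymm : C.IsSymm)
    (St : ℝ → Matrix (Fin d) (Fin d) ℝ)
    (hSt : ∀ t : ℝ, St t = ∫ s in (0:ℝ)..t,
        NormedSpace.exp (s • A) * B * Bᵀ * NormedSpace.exp (s • Aᵀ))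
    (Ct2 : ℝ → Matrix (Fin d) (Fin d) ℝ)
    (hCt2 : ∀ t : ℝ, Ct2 t =
      NormedSpace.exp ((-t) • A) * (C ^ 2 + (2:ℝ) • St t) * NormedSpace.exp ((-t) • Aᵀ)) :
    (∀ t : ℝ, 0 ≤ t → (Ct2 t - C ^ 2).PosSemidef) ↔
      ((2:ℝ) • (B * Bᵀ) - (A * C ^ 2 + C ^ 2 * Aᵀ)).PosSemidef := by
  have hC2 : (C ^ 2).IsSymm := hCsymm.pow 2
  have hL : ((2:ℝ) • (B * Bᵀ) - (A * C ^ 2 + C ^ 2 * Aᵀ)).IsHermitian := by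
    rw [isHermitian_iff_isSymm]
    simp only [IsSymm, transpose_sub, transpose_smul, transpose_add, transpose_mul,
      transpose_transpose, hC2.eq, add_comm]
  have hCt2' : Ct2 = fun t => exp ((-t) • A) *
      (C ^ 2 + ∫ s in (0:ℝ)..t, exp (s • A) * ((2:ℝ) • (B * Bᵀ)) * exp (s • Aᵀ)) *
      exp ((-t) • Aᵀ) := by
    funext t
    rw [hCt2, hSt, ← intervalIntegral.integral_smul]
    simp only [mul_smul_comm, smul_mul_assoc, Matrix.mul_assoc]
  have hderiv : ∀ t : ℝ, HasDerivAt Ct2 (exp ((-t) • A) *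
      ((2:ℝ) • (B * Bᵀ) - (A * C ^ 2 + C ^ 2 * Aᵀ)) * (exp ((-t) • A))ᵀ) t := fun t => by
    rw [hCt2', ← exp_transpose, transpose_smul]
    exact hasDerivAt_exp_neg_smul_mul_add_intervalIntegral_mul A Aᵀ _ _ t
  have hCt20 : Ct2 0 = C ^ 2 := by simp [hCt2']
  rw [← posSemidef_sub_iff_of_hasDerivAt hL (by simp) hderiv, hCt20]

theorem loewner_monotone_iff_lyapunov {d m : ℕ} (A : Matrix (Fin d) (Fin d) ℝ)
    (B : Matrix (Fin d) (Fin m) ℝ) (C : Matrix (Fin d) (Fin d) ℝ) (hC : C.PosDef)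
    (hCsymm : C.IsSymm)
    (St : ℝ → Matrix (Fin d) (Fin d) ℝ)
    (hSt : ∀ t : ℝ, St t = ∫ s in (0:ℝ)..t,
        NormedSpace.exp (s • A) * B * Bᵀ * NormedSpace.exp (s • Aᵀ))
    (Ct2 : ℝ → Matrix (Fin d) (Fin d) ℝ)
    (hCt2 : ∀ t : ℝ, Ct2 t =
      NormedSpace.exp ((-t) • A) * (C ^ 2 + (2:ℝ) • St t) * NormedSpace.exp ((-t) • Aᵀ)) :
    (∀ t : ℝ, 0 ≤ t → (Ct2 t - C ^ 2).PosSemidef) ↔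
      ((2:ℝ) • (B * Bᵀ) - (A * C ^ 2 + C ^ 2 * Aᵀ)).PosSemidef :=
  loewner_monotone_iff_lyapunov_general A B C hCsymm St hSt Ct2 hCt2
end
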